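/- arXiv:1203.6262 — 2 statements merged into one kernel-verified Lean document; each statement's English description precedes it below -/
import Mathlib

section
/- Let A ∈ M₃⊗M₃ be separable. Then the linear span of P[A] and the linear span of Q[A] both equal the range of A. -/
open Matrix BigOperators
open scoped ComplexOrder

/-- Index set for `M₃ ⊗ M₃ ≅ M₉`: pairs `(i,k)` with `i,k ∈ Fin 3`. -/
abbrev Idx : Type := Fin 3 × Fin 3

/-- `M₃ ⊗ M₃`, identified with 9×9 complex matrices. -/
abbrev M9 : Type := Matrix Idx Idx ℂ

/-- Vectors in `ℂ³ ⊗ ℂ³ ≅ ℂ⁹`. -/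
abbrev V9 : Type := Idx → ℂ

/-- The product vector `x ⊗ y`, with entries `(x⊗y)(i,k) = x i * y k`. -/
def prodVec (x y : Fin 3 → ℂ) : V9 := fun p => x p.1 * y p.2

/-- Entrywise complex conjugate of a vector in `ℂ³`. -/
def conjVec (x : Fin 3 → ℂ) : Fin 3 → ℂ := fun i => (starRingEnd ℂ) (x i)

/-- The rank-one matrix `z z*`. -/
def rankOne (z : V9) : M9 := Matrix.vecMulVec z (fun p => (starRingEnd ℂ) (z p))

/-- The partial transpose: `A^Γ((i,k),(j,l)) = A((j,k),(i,l))`. -/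
def ptrans (A : M9) : M9 := fun p q => A (q.1, p.2) (p.1, q.2)

/-- The range of a matrix `A`, as a subspace of `ℂ⁹`. -/
noncomputable def MatRange (A : M9) : Submodule ℂ V9 := LinearMap.range A.mulVecLin

/-- `A` is separable: a finite sum of `(x⊗y)(x⊗y)*` over product vectors. -/
def IsSep (A : M9) : Prop :=
  ∃ (n : ℕ) (x y : Fin n → Fin 3 → ℂ),
    A = ∑ ι : Fin n, rankOne (prodVec (x ι) (y ι))

/-- The convex cone `V₁` of all separable matrices. -/
def V1 : Set M9 := {A | IsSep A}

/-- `A` is PPT: both `A` and `A^Γ` are positive semidefinite. -/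
def IsPPT (A : M9) : Prop := A.PosSemidef ∧ (ptrans A).PosSemidef

/-- The convex cone `𝕋` of all PPT matrices. -/
def Tcone : Set M9 := {A | IsPPT A}

/-- `F` is a face of the convex set `C`. -/
def IsFaceOf (F C : Set M9) : Prop :=
  F ⊆ C ∧ Convex ℝ F ∧
    ∀ x ∈ C, ∀ y ∈ C, ∀ t : ℝ, 0 < t → t < 1 →
      (1 - t) • x + t • y ∈ F → x ∈ F ∧ y ∈ F

/-- The smallest face of `C` containing `A`. -/
def smallestFace (C : Set M9) (A : M9) : Set M9 := ⋂₀ {F | IsFaceOf F C ∧ A ∈ F}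

/-- `P[A]`: product vectors `z` with `z z* ∈ V₁[A]`. -/
def Pvecs (A : M9) : Set V9 :=
  {z | (∃ x y : Fin 3 → ℂ, z = prodVec x y) ∧ rankOne z ∈ smallestFace V1 A}

/-- `Q[A]`: product vectors `x⊗y` with `x⊗y ∈ range A` and `x̄⊗y ∈ range A^Γ`. -/
def Qvecs (A : M9) : Set V9 :=
  {z | ∃ x y : Fin 3 → ℂ, z = prodVec x y ∧
    prodVec x y ∈ MatRange A ∧ prodVec (conjVec x) y ∈ MatRange (ptrans A)}

/-- The face `𝕋[A]` of the PPT cone determined by `A`. -/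
def TFace (A : M9) : Set M9 :=
  {B | IsPPT B ∧ MatRange B ≤ MatRange A ∧ MatRange (ptrans B) ≤ MatRange (ptrans A)}

/-- `x` is an interior point of the convex set `C`. -/
def IsInteriorPt (x : M9) (C : Set M9) : Prop :=
  x ∈ C ∧ ∀ y ∈ C, ∃ t : ℝ, 1 < t ∧ (1 - t) • y + t • x ∈ C

/-- The matrix `A[a,b,c]` of the paper. -/
def Amat (a b c : ℝ) : M9 := fun p q =>
  if p = q then
    (if p.1 = p.2 then (a : ℂ) else if p.2 = p.1 + 1 then (c : ℂ) else (b : ℂ))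
  else if p.1 = p.2 ∧ q.1 = q.2 then 1 else 0

/-!
Write `A = ∑ zᵢ zᵢ*` with product vectors `zᵢ = xᵢ ⊗ yᵢ`. Then `range A = span {zᵢ}` and
`A^Γ = ∑ (x̄ᵢ ⊗ yᵢ)(x̄ᵢ ⊗ yᵢ)*`, so every `zᵢ` lies in `Q[A]`; and since `A - zᵢzᵢ*` is
separable, `zᵢzᵢ*` lies in every face of `V₁` containing `A`, so every `zᵢ` lies in `P[A]`.
Conversely `Q[A] ⊆ range A` by definition, and `P[A] ⊆ range A` because
`{B ∈ V₁ | range B ⊆ range A}` is a face of `V₁`: the range of a sum of separable matrices is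
the span of all the product vectors involved, so it contains the range of each summand.
-/

section Range

variable {ι : Type*} [Fintype ι]

theorem matRange_sum_rankOne (v : ι → V9) :
    MatRange (∑ i, rankOne (v i)) = Submodule.span ℂ (Set.range v) := by
  set V : Matrix Idx ι ℂ := Matrix.of fun p i => v i p
  have hsum : ∑ i, rankOne (v i) = V * Vᴴ := by
    funext p q
    simp only [Matrix.sum_apply, Matrix.mul_apply, rankOne, Matrix.vecMulVec, V,
      Matrix.of_apply, Matrix.conjTranspose_apply, starRingEnd_apply]
  have hrange : LinearMap.range (V * Vᴴ).mulVecLin = LinearMap.range V.mulVecLin := by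
    refine Submodule.eq_of_le_of_finrank_le ?_ (Matrix.rank_self_mul_conjTranspose V).ge
    rw [Matrix.mulVecLin_mul]
    exact LinearMap.range_comp_le_range _ _
  rw [MatRange, hsum, hrange, Matrix.range_mulVecLin]
  rfl

end Range

theorem mem_matRange_rankOne_self (z : V9) : z ∈ MatRange (rankOne z) := by
  have h := matRange_sum_rankOne fun _ : Unit => z
  rw [Fintype.sum_unique] at h
  rw [h]
  exact Submodule.subset_span ⟨(), rfl⟩

theorem matRange_smul_le (c : ℝ) (M : M9) : MatRange (c • M) ≤ MatRange M := by
  rintro _ ⟨v, rfl⟩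
  exact ⟨c • v, by simp⟩

theorem matRange_add_le (M N : M9) : MatRange (M + N) ≤ MatRange M ⊔ MatRange N := by
  rw [MatRange, Matrix.mulVecLin_add]
  exact LinearMap.range_add_le _ _

theorem ptrans_sum_rankOne {n : ℕ} (x y : Fin n → Fin 3 → ℂ) :
    ptrans (∑ ι, rankOne (prodVec (x ι) (y ι))) =
      ∑ ι, rankOne (prodVec (conjVec (x ι)) (y ι)) := by
  funext p q
  simp only [ptrans, Matrix.sum_apply]
  refine Finset.sum_congr rfl fun ι _ => ?_
  simp only [rankOne, prodVec, conjVec, Matrix.vecMulVec_apply, map_mul, Complex.conj_conj]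
  ring

namespace IsSep

theorem zero : IsSep 0 := ⟨0, Fin.elim0, Fin.elim0, by simp⟩

theorem rankOne_prodVec (x y : Fin 3 → ℂ) : IsSep (rankOne (prodVec x y)) :=
  ⟨1, fun _ => x, fun _ => y, by simp⟩

theorem add {A B : M9} (hA : IsSep A) (hB : IsSep B) : IsSep (A + B) := by
  obtain ⟨n, x, y, rfl⟩ := hA
  obtain ⟨m, x', y', rfl⟩ := hB
  refine ⟨n + m, Fin.append x x', Fin.append y y', ?_⟩
  simp [Fin.sum_univ_add]

theorem sum {ι : Type*} (s : Finset ι) {A : ι → M9} (hA : ∀ i ∈ s, IsSep (A i)) :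
    IsSep (∑ i ∈ s, A i) :=
  Finset.sum_induction _ IsSep (fun _ _ => add) zero hA

theorem smul {A : M9} (hA : IsSep A) {t : ℝ} (ht : 0 ≤ t) : IsSep (t • A) := by
  obtain ⟨n, x, y, rfl⟩ := hA
  refine ⟨n, fun ι => (Real.sqrt t : ℂ) • x ι, y, ?_⟩
  rw [Finset.smul_sum]
  refine Finset.sum_congr rfl fun ι _ => ?_
  funext p q
  have hsqrt : (Real.sqrt t : ℂ) * (Real.sqrt t : ℂ) = t := by
    rw [← Complex.ofReal_mul, Real.mul_self_sqrt ht]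
  simp only [rankOne, prodVec, Matrix.smul_apply, Matrix.vecMulVec_apply, Pi.smul_apply,
    smul_eq_mul, map_mul, Complex.conj_ofReal, Complex.real_smul, ← hsqrt]
  ring

theorem matRange_le_add {B C : M9} (hB : IsSep B) (hC : IsSep C) :
    MatRange B ≤ MatRange (B + C) := by
  obtain ⟨n, x, y, rfl⟩ := hB
  obtain ⟨m, x', y', rfl⟩ := hC
  set v := fun ι => prodVec (x ι) (y ι)
  set w := fun ι => prodVec (x' ι) (y' ι)
  have hsum : ∑ ι, rankOne (v ι) + ∑ ι, rankOne (w ι) = ∑ ι, rankOne (Sum.elim v w ι) := by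
    simp [Fintype.sum_sum_type]
  rw [hsum, matRange_sum_rankOne, matRange_sum_rankOne, Set.Sum.elim_range]
  exact Submodule.span_mono Set.subset_union_left

theorem matRange_le_smul_add {B C : M9} (hB : IsSep B) (hC : IsSep C) {s r : ℝ}
    (hs : 0 < s) (hr : 0 ≤ r) : MatRange B ≤ MatRange (s • B + r • C) :=
  calc MatRange B = MatRange (s⁻¹ • s • B) := by rw [smul_smul, inv_mul_cancel₀ hs.ne', one_smul]
    _ ≤ MatRange (s • B) := matRange_smul_le _ _
    _ ≤ MatRange (s • B + r • C) := (hB.smul hs.le).matRange_le_add (hC.smul hr)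

end IsSep

theorem IsFaceOf.mem_of_add_mem {F : Set M9} (hF : IsFaceOf F V1) {B R : M9} (hB : IsSep B)
    (hR : IsSep R) (h : B + R ∈ F) : B ∈ F := by
  have h2B : (2 : ℝ) • B ∈ F := by
    have hmid : (1 - (1 / 2 : ℝ)) • ((2 : ℝ) • B) + (1 / 2 : ℝ) • ((2 : ℝ) • R) = B + R := by
      rw [smul_smul, smul_smul]; norm_num
    exact (hF.2.2 _ (hB.smul (by norm_num)) _ (hR.smul (by norm_num)) (1 / 2) (by norm_num)
      (by norm_num) (hmid ▸ h)).1
  have hmid : (1 - (1 / 2 : ℝ)) • B + (1 / 2 : ℝ) • ((3 : ℝ) • B) = (2 : ℝ) • B := by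
    rw [smul_smul, ← add_smul]; norm_num
  exact (hF.2.2 _ hB _ (hB.smul (by norm_num)) (1 / 2) (by norm_num) (by norm_num)
    (hmid ▸ h2B)).1

theorem rankOne_mem_smallestFace {n : ℕ} (x y : Fin n → Fin 3 → ℂ) (j : Fin n) :
    rankOne (prodVec (x j) (y j)) ∈
      smallestFace V1 (∑ ι, rankOne (prodVec (x ι) (y ι))) := by
  rintro F ⟨hF, hAF⟩
  rw [← Finset.add_sum_erase _ _ (Finset.mem_univ j)] at hAF
  exact hF.mem_of_add_mem (IsSep.rankOne_prodVec _ _)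
    (IsSep.sum _ fun _ _ => IsSep.rankOne_prodVec _ _) hAF

def rangeFace (A : M9) : Set M9 := {B | IsSep B ∧ MatRange B ≤ MatRange A}

theorem isFaceOf_rangeFace (A : M9) : IsFaceOf (rangeFace A) V1 := by
  refine ⟨fun B hB => hB.1, ?_, ?_⟩
  · rintro B ⟨hB, hBA⟩ C ⟨hC, hCA⟩ a b ha hb -
    refine ⟨(hB.smul ha).add (hC.smul hb), (matRange_add_le _ _).trans (sup_le ?_ ?_)⟩
    · exact (matRange_smul_le _ _).trans hBA
    · exact (matRange_smul_le _ _).trans hCA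
  · rintro B hB C hC t ht0 ht1 ⟨-, hA⟩
    refine ⟨⟨hB, (hB.matRange_le_smul_add hC (by linarith) ht0.le).trans hA⟩,
      ⟨hC, ?_⟩⟩
    rw [add_comm] at hA
    exact (hC.matRange_le_smul_add hB ht0 (by linarith)).trans hA

theorem matRange_le_of_mem_smallestFace {A B : M9} (hA : IsSep A)
    (hB : B ∈ smallestFace V1 A) : MatRange B ≤ MatRange A :=
  (hB _ ⟨isFaceOf_rangeFace A, hA, le_rfl⟩).2

theorem Pvecs_subset_matRange {A : M9} (hA : IsSep A) : Pvecs A ⊆ MatRange A :=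
  fun z hz => matRange_le_of_mem_smallestFace hA hz.2 (mem_matRange_rankOne_self z)

theorem Qvecs_subset_matRange (A : M9) : Qvecs A ⊆ MatRange A := by
  rintro _ ⟨x, y, rfl, h, -⟩
  exact h

/-- For separable `A`, `span P[A] = span Q[A] = range A`. -/
theorem stmt1 (A : M9) (hA : IsSep A) :
    Submodule.span ℂ (Pvecs A) = MatRange A ∧
    Submodule.span ℂ (Qvecs A) = MatRange A := by
  obtain ⟨n, x, y, hAxy⟩ := id hA
  set z := fun ι => prodVec (x ι) (y ι)
  have hrange : MatRange A = Submodule.span ℂ (Set.range z) := hAxy ▸ matRange_sum_rankOne z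
  have hP : Set.range z ⊆ Pvecs A := by
    rintro _ ⟨ι, rfl⟩
    exact ⟨⟨x ι, y ι, rfl⟩, hAxy ▸ rankOne_mem_smallestFace x y ι⟩
  have hQ : Set.range z ⊆ Qvecs A := by
    rintro _ ⟨ι, rfl⟩
    refine ⟨x ι, y ι, rfl, hrange ▸ Submodule.subset_span ⟨ι, rfl⟩, ?_⟩
    rw [hAxy, ptrans_sum_rankOne, matRange_sum_rankOne]
    exact Submodule.subset_span ⟨ι, rfl⟩
  constructor
  · refine le_antisymm (Submodule.span_le.2 (Pvecs_subset_matRange hA)) ?_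
    exact hrange ▸ Submodule.span_mono hP
  · refine le_antisymm (Submodule.span_le.2 (Qvecs_subset_matRange A)) ?_
    exact hrange ▸ Submodule.span_mono hQ
end

section
/- The smallest face of the cone V₁ containing A[1,1,1] satisfies V₁[A[1,1,1]] = V₁ ∩ T[A[1,1,1]]. -/
open Matrix BigOperators
open scoped ComplexOrder

open ComplexConjugate

/-!
For every `A`, the set `V₁ ∩ 𝕋[A]` is a face of `V₁`: if `X, Y` are positive semidefinite, the
range of `X` lies in the range of `sX + tY` for `s > 0`, `t ≥ 0`, and the same holds after
partial transposition. Conversely, let `B = ∑ (x⊗y)(x⊗y)*` lie in `V₁ ∩ 𝕋[A]` with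
`A = A[1,1,1]`. Each `x⊗y` lies in `range A` and each `x̄⊗y` in `range A^Γ`, which forces
`y ∥ x̄` and `|x₀| = |x₁| = |x₂|`. Averaging `(x⊗x̄)(x⊗x̄)*` over the sixteen phase twists
`x ↦ (x₀, iᵃx₁, iᵇx₂)` gives `|x₀|⁴ A`, so `cA - B ∈ V₁` for some `c > 0`, and every face of
the cone `V₁` containing `A` then contains `B`.
-/

namespace Matrix

variable {𝕜 n : Type*} [RCLike 𝕜] [Fintype n]

theorem range_mulVecLin_le_of_ker_le {X Z : Matrix n n 𝕜} (hX : X.IsHermitian)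
    (hZ : Z.IsHermitian) (h : LinearMap.ker Z.mulVecLin ≤ LinearMap.ker X.mulVecLin) :
    LinearMap.range X.mulVecLin ≤ LinearMap.range Z.mulVecLin := by
  classical
  have key : LinearMap.range (toEuclideanLin X) ≤ LinearMap.range (toEuclideanLin Z) := by
    rw [← (LinearMap.range _).orthogonal_orthogonal,
      (isSymmetric_toEuclideanLin_iff.mpr hX).orthogonal_range,
      ← (LinearMap.range (toEuclideanLin Z)).orthogonal_orthogonal,
      (isSymmetric_toEuclideanLin_iff.mpr hZ).orthogonal_range]
    refine Submodule.orthogonal_le fun v hv => ?_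
    have : Z *ᵥ WithLp.ofLp v = 0 := congrArg WithLp.ofLp hv
    exact congrArg (WithLp.toLp 2) (h this)
  rintro _ ⟨u, rfl⟩
  obtain ⟨w, hw⟩ := key ⟨WithLp.toLp 2 u, rfl⟩
  exact ⟨WithLp.ofLp w, congrArg WithLp.ofLp hw⟩

theorem PosSemidef.ker_mulVecLin_add_le_left {X Y : Matrix n n 𝕜} (hX : X.PosSemidef)
    (hY : Y.PosSemidef) : LinearMap.ker (X + Y).mulVecLin ≤ LinearMap.ker X.mulVecLin := by
  intro f hf
  have hsum : star f ⬝ᵥ X *ᵥ f + star f ⬝ᵥ Y *ᵥ f = 0 := by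
    rw [← dotProduct_add, ← add_mulVec]
    simp only [LinearMap.mem_ker, mulVecLin_apply] at hf
    rw [hf, dotProduct_zero]
  exact (hX.dotProduct_mulVec_zero_iff f).mp ((add_eq_zero_iff_of_nonneg
    (hX.dotProduct_mulVec_nonneg f) (hY.dotProduct_mulVec_nonneg f)).mp hsum).1

theorem PosSemidef.range_mulVecLin_le_add_left {X Y : Matrix n n 𝕜} (hX : X.PosSemidef)
    (hY : Y.PosSemidef) : LinearMap.range X.mulVecLin ≤ LinearMap.range (X + Y).mulVecLin :=
  range_mulVecLin_le_of_ker_le hX.1 (hX.add hY).1 (hX.ker_mulVecLin_add_le_left hY)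

theorem range_mulVecLin_le_smul {X : Matrix n n 𝕜} {c : ℝ} (hc : c ≠ 0) :
    LinearMap.range X.mulVecLin ≤ LinearMap.range (c • X).mulVecLin := by
  rintro _ ⟨u, rfl⟩
  refine ⟨c⁻¹ • u, ?_⟩
  simp only [mulVecLin_apply, smul_mulVec, mulVec_smul, smul_smul, inv_mul_cancel₀ hc, one_smul]

theorem PosSemidef.range_mulVecLin_le_smul_add {X Y : Matrix n n 𝕜} (hX : X.PosSemidef)
    (hY : Y.PosSemidef) {s t : ℝ} (hs : 0 < s) (ht : 0 ≤ t) :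
    LinearMap.range X.mulVecLin ≤ LinearMap.range (s • X + t • Y).mulVecLin :=
  (range_mulVecLin_le_smul hs.ne').trans <|
    (hX.smul hs.le).range_mulVecLin_le_add_left (hY.smul ht)

theorem self_mem_range_vecMulVec_star (z : n → 𝕜) :
    z ∈ LinearMap.range (vecMulVec z (star z)).mulVecLin := by
  by_cases hz : z = 0
  · rw [hz]; exact zero_mem _
  have hzz : star z ⬝ᵥ z ≠ 0 := by
    rwa [Ne, dotProduct_star_self_eq_zero]
  refine ⟨(star z ⬝ᵥ z)⁻¹ • z, ?_⟩
  rw [mulVecLin_apply, mulVec_smul, vecMulVec_mulVec, op_smul_eq_smul, smul_smul,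
    inv_mul_cancel₀ hzz, one_smul]

theorem mem_range_sum_vecMulVec_star {ι : Type*} [Fintype ι] (z : ι → n → 𝕜) (i : ι) :
    z i ∈ LinearMap.range (∑ j, vecMulVec (z j) (star (z j))).mulVecLin := by
  classical
  rw [← Finset.add_sum_erase _ _ (Finset.mem_univ i)]
  exact (posSemidef_vecMulVec_self_star _).range_mulVecLin_le_add_left
    (posSemidef_sum _ fun j _ => posSemidef_vecMulVec_self_star _)
    (self_mem_range_vecMulVec_star _)

theorem range_mulVecLin_smul_add_le {X Y : Matrix n n 𝕜} {S : Submodule 𝕜 (n → 𝕜)}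
    (hX : LinearMap.range X.mulVecLin ≤ S) (hY : LinearMap.range Y.mulVecLin ≤ S) (s t : ℝ) :
    LinearMap.range (s • X + t • Y).mulVecLin ≤ S := by
  rintro _ ⟨u, rfl⟩
  rw [mulVecLin_apply, add_mulVec, smul_mulVec, smul_mulVec]
  exact add_mem (S.smul_of_tower_mem s (hX ⟨u, rfl⟩)) (S.smul_of_tower_mem t (hY ⟨u, rfl⟩))

end Matrix

lemma exists_eq_smul_of_mul_comm {ι K : Type*} [Field K] {u v : ι → K} (hu : u ≠ 0)
    (h : ∀ i k, u i * v k = u k * v i) : ∃ c : K, v = c • u := by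
  obtain ⟨a, ha⟩ := Function.ne_iff.mp hu
  refine ⟨v a / u a, funext fun k => ?_⟩
  rw [Pi.smul_apply, smul_eq_mul, div_mul_eq_mul_div, eq_div_iff ha]
  linear_combination h a k

lemma rankOne_smul (a : ℂ) (z : V9) : rankOne (a • z) = Complex.normSq a • rankOne z := by
  ext p q
  simp only [rankOne, vecMulVec_apply, Pi.smul_apply, smul_eq_mul, map_mul, Matrix.smul_apply,
    Complex.real_smul, Complex.normSq_eq_conj_mul_self]
  ring

lemma prodVec_smul_left (a : ℂ) (x y : Fin 3 → ℂ) : prodVec (a • x) y = a • prodVec x y := by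
  ext p
  simp only [prodVec, Pi.smul_apply, smul_eq_mul, mul_assoc]

lemma prodVec_smul_right (a : ℂ) (x y : Fin 3 → ℂ) : prodVec x (a • y) = a • prodVec x y := by
  ext p
  simp only [prodVec, Pi.smul_apply, smul_eq_mul]
  ring

lemma ptrans_rankOne_prodVec (x y : Fin 3 → ℂ) :
    ptrans (rankOne (prodVec x y)) = rankOne (prodVec (conjVec x) y) := by
  ext p q
  simp only [ptrans, rankOne, prodVec, conjVec, vecMulVec_apply, map_mul, Complex.conj_conj]
  ring

lemma ptrans_sum {ι : Type*} (s : Finset ι) (M : ι → M9) :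
    ptrans (∑ i ∈ s, M i) = ∑ i ∈ s, ptrans (M i) := by
  ext p q
  simp only [ptrans, Matrix.sum_apply]

lemma ptrans_smul_add (s t : ℝ) (X Y : M9) :
    ptrans (s • X + t • Y) = s • ptrans X + t • ptrans Y := by
  ext p q
  simp only [ptrans, Matrix.add_apply, Matrix.smul_apply]

lemma rankOne_prodVec_mem_V1 (x y : Fin 3 → ℂ) : rankOne (prodVec x y) ∈ V1 :=
  ⟨1, fun _ => x, fun _ => y, by simp⟩

lemma add_mem_V1 {B C : M9} (hB : B ∈ V1) (hC : C ∈ V1) : B + C ∈ V1 := by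
  obtain ⟨n, x, y, rfl⟩ := hB
  obtain ⟨m, x', y', rfl⟩ := hC
  refine ⟨n + m, Fin.append x x', Fin.append y y', ?_⟩
  simp only [Fin.sum_univ_add, Fin.append_left, Fin.append_right]

lemma smul_mem_V1 {c : ℝ} (hc : 0 ≤ c) {B : M9} (hB : B ∈ V1) : c • B ∈ V1 := by
  obtain ⟨n, x, y, rfl⟩ := hB
  refine ⟨n, fun i => (Real.sqrt c : ℂ) • x i, y, ?_⟩
  simp only [Finset.smul_sum, prodVec_smul_left, rankOne_smul, Complex.normSq_ofReal,
    Real.mul_self_sqrt hc]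

def V1cone : PointedCone ℝ M9 where
  carrier := V1
  add_mem' := add_mem_V1
  zero_mem' := ⟨0, Fin.elim0, Fin.elim0, by simp⟩
  smul_mem' c _ hB := smul_mem_V1 c.2 hB

lemma isPPT_of_mem_V1 {B : M9} (hB : B ∈ V1) : IsPPT B := by
  obtain ⟨n, x, y, rfl⟩ := hB
  refine ⟨posSemidef_sum _ fun i _ => posSemidef_vecMulVec_self_star _, ?_⟩
  rw [ptrans_sum]
  simp only [ptrans_rankOne_prodVec]
  exact posSemidef_sum _ fun i _ => posSemidef_vecMulVec_self_star _

lemma IsFaceOf.mem_of_smul_sub_mem {K : PointedCone ℝ M9} {F : Set M9} (hF : IsFaceOf F K)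
    {A B : M9} (hA : A ∈ F) (hB : B ∈ K) {c : ℝ} (hc : 0 < c) (h : c • A - B ∈ K) :
    B ∈ F := by
  have hy : c⁻¹ • ((c + 1) • A - B) ∈ K := by
    refine PointedCone.smul_mem K (inv_nonneg.2 hc.le) ?_
    rw [add_smul, one_smul, add_sub_right_comm]
    exact K.add_mem h (hF.1 hA)
  refine (hF.2.2 _ hy _ hB (c + 1)⁻¹ (by positivity) (inv_lt_one_of_one_lt₀ (by linarith)) ?_).2
  convert hA using 1
  have : c + 1 ≠ 0 := by positivity
  match_scalars <;> field_simp <;> ring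

lemma smallestFace_subset {C F : Set M9} {A : M9} (hF : IsFaceOf F C) (hA : A ∈ F) :
    smallestFace C A ⊆ F :=
  Set.sInter_subset_of_mem ⟨hF, hA⟩

lemma mem_smallestFace_of_smul_sub_mem {K : PointedCone ℝ M9} {A B : M9} (hB : B ∈ K) {c : ℝ}
    (hc : 0 < c) (h : c • A - B ∈ K) : B ∈ smallestFace K A :=
  fun _ ⟨hF, hA⟩ => hF.mem_of_smul_sub_mem hA hB hc h

lemma PointedCone.exists_smul_sub_sum_mem {E ι : Type*} [AddCommGroup E] [Module ℝ E]
    (K : PointedCone ℝ E) {A : E} (hA : A ∈ K) (s : Finset ι) {B : ι → E}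
    (hB : ∀ i ∈ s, ∃ c : ℝ, 0 < c ∧ c • A - B i ∈ K) :
    ∃ c : ℝ, 0 < c ∧ c • A - ∑ i ∈ s, B i ∈ K := by
  refine Finset.sum_induction B (fun B => ∃ c : ℝ, 0 < c ∧ c • A - B ∈ K) ?_
    ⟨1, one_pos, by simpa⟩ hB
  rintro _ _ ⟨c, hc, h⟩ ⟨d, hd, h'⟩
  refine ⟨c + d, add_pos hc hd, ?_⟩
  convert K.add_mem h h' using 1
  rw [add_smul]
  abel

lemma isFaceOf_V1_inter_TFace (A : M9) : IsFaceOf (V1 ∩ TFace A) V1 := by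
  refine ⟨Set.inter_subset_left, ?_, ?_⟩
  · rintro B ⟨hB, -, hBr, hBrΓ⟩ C ⟨hC, -, hCr, hCrΓ⟩ a b ha hb -
    have hV1 := add_mem_V1 (smul_mem_V1 ha hB) (smul_mem_V1 hb hC)
    refine ⟨hV1, isPPT_of_mem_V1 hV1, range_mulVecLin_smul_add_le hBr hCr a b, ?_⟩
    rw [ptrans_smul_add]
    exact range_mulVecLin_smul_add_le hBrΓ hCrΓ a b
  · rintro X hX Y hY t ht0 ht1 ⟨-, -, hr, hrΓ⟩
    obtain ⟨hXp, hXpΓ⟩ := isPPT_of_mem_V1 hX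
    obtain ⟨hYp, hYpΓ⟩ := isPPT_of_mem_V1 hY
    have h1t : 0 < 1 - t := sub_pos.2 ht1
    rw [ptrans_smul_add] at hrΓ
    refine ⟨⟨hX, ⟨hXp, hXpΓ⟩, le_trans ?_ hr, le_trans ?_ hrΓ⟩,
      ⟨hY, ⟨hYp, hYpΓ⟩, le_trans ?_ hr, le_trans ?_ hrΓ⟩⟩
    · exact hXp.range_mulVecLin_le_smul_add hYp h1t ht0.le
    · exact hXpΓ.range_mulVecLin_le_smul_add hYpΓ h1t ht0.le
    · rw [add_comm]; exact hYp.range_mulVecLin_le_smul_add hXp ht0 h1t.le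
    · rw [add_comm]; exact hYpΓ.range_mulVecLin_le_smul_add hXpΓ ht0 h1t.le

lemma Amat_one_one_one_apply (p q : Idx) :
    Amat 1 1 1 p q = if p = q ∨ (p.1 = p.2 ∧ q.1 = q.2) then 1 else 0 := by
  unfold Amat
  split_ifs <;> simp_all

lemma Amat_one_one_one_mulVec (u : V9) (i k : Fin 3) :
    (Amat 1 1 1 *ᵥ u) (i, k) = if i = k then ∑ j, u (j, j) else u (i, k) := by
  simp only [mulVec, dotProduct, Fintype.sum_prod_type, Fin.sum_univ_three,
    Amat_one_one_one_apply]
  fin_cases i <;> fin_cases k <;> simp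

lemma ptrans_Amat_one_one_one_mulVec (u : V9) (i k : Fin 3) :
    (ptrans (Amat 1 1 1) *ᵥ u) (i, k) = if i = k then u (i, i) else u (i, k) + u (k, i) := by
  simp only [mulVec, dotProduct, Fintype.sum_prod_type, Fin.sum_univ_three, ptrans,
    Amat_one_one_one_apply]
  fin_cases i <;> fin_cases k <;> simp <;> ring

lemma diag_eq_of_mem_range_Amat_one_one_one {v : V9} (hv : v ∈ MatRange (Amat 1 1 1))
    (i j : Fin 3) : v (i, i) = v (j, j) := by
  obtain ⟨u, rfl⟩ := hv
  simp only [mulVecLin_apply, Amat_one_one_one_mulVec, if_true]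

lemma symm_of_mem_range_ptrans_Amat_one_one_one {v : V9}
    (hv : v ∈ MatRange (ptrans (Amat 1 1 1))) (i k : Fin 3) : v (i, k) = v (k, i) := by
  obtain ⟨u, rfl⟩ := hv
  simp only [mulVecLin_apply, ptrans_Amat_one_one_one_mulVec, eq_comm (a := k), add_comm]
  split_ifs with h
  · rw [h]
  · rfl

/-- Averaging `φ p.1 * φ̄ p.2 * φ̄ q.1 * φ q.2` over these sixteen phase vectors `φ` kills every
entry except those with `{p.1, q.2} = {p.2, q.1}`, which form the support of `A[1,1,1]`; Gaussian
integers make this identity decidable. -/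
def gaussPhase (ab : Fin 4 × Fin 4) : Fin 3 → GaussianInt :=
  ![1, ⟨0, 1⟩ ^ (ab.1 : ℕ), ⟨0, 1⟩ ^ (ab.2 : ℕ)]

lemma sum_gaussPhase : ∀ p q : Idx,
    ∑ ab, gaussPhase ab p.1 * star (gaussPhase ab p.2) * star (gaussPhase ab q.1) *
      gaussPhase ab q.2 = if p = q ∨ (p.1 = p.2 ∧ q.1 = q.2) then 16 else 0 := by
  decide

noncomputable def phaseVec (x : Fin 3 → ℂ) (ab : Fin 4 × Fin 4) : Fin 3 → ℂ :=
  fun m => x m * GaussianInt.toComplex (gaussPhase ab m)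

lemma phaseVec_zero (x : Fin 3 → ℂ) : phaseVec x 0 = x := by
  ext m
  fin_cases m <;> simp [phaseVec, gaussPhase]

lemma smul_Amat_one_one_one_eq_sum_phaseVec {x : Fin 3 → ℂ} {s : ℝ}
    (hx : ∀ i, Complex.normSq (x i) = s) :
    s ^ 2 • Amat 1 1 1 =
      ∑ ab, (1 / 16 : ℝ) • rankOne (prodVec (phaseVec x ab) (conjVec (phaseVec x ab))) := by
  ext p q
  have hterm : ∀ ab, rankOne (prodVec (phaseVec x ab) (conjVec (phaseVec x ab))) p q =
      x p.1 * conj (x p.2) * conj (x q.1) * x q.2 * GaussianInt.toComplex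
        (gaussPhase ab p.1 * star (gaussPhase ab p.2) * star (gaussPhase ab q.1) *
          gaussPhase ab q.2) := by
    intro ab
    simp only [rankOne, prodVec, conjVec, phaseVec, vecMulVec_apply, map_mul,
      GaussianInt.toComplex_star, Complex.conj_conj]
    ring
  simp only [Matrix.sum_apply, Matrix.smul_apply, hterm, Complex.real_smul, ← Finset.mul_sum,
    ← map_sum, sum_gaussPhase, Amat_one_one_one_apply, apply_ite GaussianInt.toComplex, map_ofNat,
    map_zero]
  have hnorm : ∀ i, x i * conj (x i) = s := fun i => by rw [Complex.mul_conj, hx]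
  split_ifs with h
  · push_cast
    rcases h with rfl | ⟨h1, h2⟩
    · linear_combination -(x p.2 * conj (x p.2)) * hnorm p.1 - s * hnorm p.2
    · rw [h1, h2]
      linear_combination -(x q.2 * conj (x q.2)) * hnorm p.2 - s * hnorm q.2
  · simp

lemma Amat_one_one_one_mem_V1 : Amat 1 1 1 ∈ V1 := by
  have h := smul_Amat_one_one_one_eq_sum_phaseVec (x := fun _ => 1) (s := 1) (by simp)
  rw [one_pow, one_smul] at h
  rw [h]
  exact V1cone.sum_mem fun ab _ => smul_mem_V1 (by norm_num) (rankOne_prodVec_mem_V1 _ _)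

lemma smul_Amat_one_one_one_sub_rankOne_mem_V1 {x : Fin 3 → ℂ} {s : ℝ}
    (hx : ∀ i, Complex.normSq (x i) = s) :
    s ^ 2 • Amat 1 1 1 - (1 / 16 : ℝ) • rankOne (prodVec x (conjVec x)) ∈ V1 := by
  rw [smul_Amat_one_one_one_eq_sum_phaseVec hx, Fintype.sum_eq_add_sum_compl 0, phaseVec_zero,
    add_sub_cancel_left]
  exact V1cone.sum_mem fun ab _ => smul_mem_V1 (by norm_num) (rankOne_prodVec_mem_V1 _ _)

lemma exists_eq_smul_conjVec_of_mem_range_Amat_one_one_one {x y : Fin 3 → ℂ}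
    (hA : prodVec x y ∈ MatRange (Amat 1 1 1))
    (hAΓ : prodVec (conjVec x) y ∈ MatRange (ptrans (Amat 1 1 1))) (h0 : prodVec x y ≠ 0) :
    ∃ ν : ℂ, y = ν • conjVec x ∧ ∀ i, Complex.normSq (x i) = Complex.normSq (x 0) := by
  have hx : conjVec x ≠ 0 := by
    rintro hx
    apply h0
    ext p
    simp [prodVec, show x p.1 = 0 by simpa [conjVec] using congrFun hx p.1]
  obtain ⟨ν, rfl⟩ := exists_eq_smul_of_mul_comm hx fun i k =>
    symm_of_mem_range_ptrans_Amat_one_one_one hAΓ i k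
  have hν : ν ≠ 0 := by
    rintro rfl
    exact h0 (by ext; simp [prodVec])
  refine ⟨ν, rfl, fun i => ?_⟩
  have h := diag_eq_of_mem_range_Amat_one_one_one hA i 0
  simp only [prodVec, conjVec, Pi.smul_apply, smul_eq_mul, mul_left_comm (x _) ν,
    Complex.mul_conj, mul_right_inj' hν] at h
  exact_mod_cast h

lemma exists_smul_Amat_one_one_one_sub_rankOne_mem_V1 {z : V9} (hz : z ∈ Qvecs (Amat 1 1 1)) :
    ∃ c : ℝ, 0 < c ∧ c • Amat 1 1 1 - rankOne z ∈ V1 := by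
  obtain ⟨x, y, rfl, hA, hAΓ⟩ := hz
  by_cases h0 : prodVec x y = 0
  · exact ⟨1, one_pos, by simpa [h0, rankOne] using Amat_one_one_one_mem_V1⟩
  obtain ⟨ν, rfl, hmod⟩ := exists_eq_smul_conjVec_of_mem_range_Amat_one_one_one hA hAΓ h0
  have hν16 : 0 ≤ 16 * Complex.normSq ν := by linarith [Complex.normSq_nonneg ν]
  refine ⟨16 * Complex.normSq ν * Complex.normSq (x 0) ^ 2 + 1,
    by nlinarith [mul_nonneg hν16 (sq_nonneg (Complex.normSq (x 0)))], ?_⟩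
  convert add_mem_V1 Amat_one_one_one_mem_V1
    (smul_mem_V1 hν16 (smul_Amat_one_one_one_sub_rankOne_mem_V1 hmod)) using 1
  rw [prodVec_smul_right, rankOne_smul]
  module

lemma prodVec_mem_Qvecs_of_sum_mem_TFace {A : M9} {n : ℕ} {x y : Fin n → Fin 3 → ℂ}
    (h : ∑ i, rankOne (prodVec (x i) (y i)) ∈ TFace A) (i : Fin n) :
    prodVec (x i) (y i) ∈ Qvecs A := by
  refine ⟨x i, y i, rfl, h.2.1 (mem_range_sum_vecMulVec_star _ i), h.2.2 ?_⟩
  rw [ptrans_sum]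
  simp only [ptrans_rankOne_prodVec]
  exact mem_range_sum_vecMulVec_star (fun j => prodVec (conjVec (x j)) (y j)) i

/-- `V₁[A[1,1,1]] = V₁ ∩ 𝕋[A[1,1,1]]`. -/
theorem stmt13 : smallestFace V1 (Amat 1 1 1) = V1 ∩ TFace (Amat 1 1 1) := by
  refine Set.Subset.antisymm (smallestFace_subset (isFaceOf_V1_inter_TFace _)
    ⟨Amat_one_one_one_mem_V1, isPPT_of_mem_V1 Amat_one_one_one_mem_V1, le_rfl, le_rfl⟩) ?_
  rintro B ⟨hB, hBT⟩
  obtain ⟨n, x, y, rfl⟩ := id hB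
  obtain ⟨c, hc, h⟩ := V1cone.exists_smul_sub_sum_mem Amat_one_one_one_mem_V1 Finset.univ
    fun i _ => exists_smul_Amat_one_one_one_sub_rankOne_mem_V1
      (prodVec_mem_Qvecs_of_sum_mem_TFace hBT i)
  exact mem_smallestFace_of_smul_sub_mem hB hc h
end
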